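/- If a group G is finitely presented and S is a finite generating set of G, then G has S-bounded H²: the ℤG-module Z₁(Cay(G,S)) of integral 1-cycles on the Cayley graph is generated by a collection 𝒞 of cycles of bounded ℓ¹-norm, and there is a function Δ: ℕ → ℕ such that every integral 1-cycle of ℓ¹-norm at most n can be written as a sum Σ_{i=1}^k g_i c_i with c_i ∈ 𝒞, g_i ∈ G, and k ≤ Δ(n). -/

import Mathlib

/-!
Let `F` be the free group on the neighbours of `1` in `Cay(G,S)` and `π : F → G` the
evaluation. A word `w` spells a path from `1`; its 1-chain `θ w` satisfies
`θ (u v) = θ u + π u • θ v`, i.e. `θ` is the chain part of the lift `F → ℤ[G × G] ⋊ G`.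
Finite presentability makes `ker π` the normal closure of a finite set `R`, and on `ker π`
the map `θ` is additive and equivariant for conjugation, so `θ w` is a sum of translates
of `±θ r` (`r ∈ R`) for every `w ∈ ker π`.

A 1-cycle of ℓ¹-norm `n` peels off, one closed walk at a time, into at most `n` translated loops
`θ w` with `|w| ≤ n`. There are finitely many such words, so their areas are bounded by some
`D n`, and every such cycle has area at most `n * D n`.
-/

open Finsupp

variable {V : Type*}

/-- 0-chains. -/
abbrev C0 (V : Type*) := V →₀ ℝ
/-- 1-chains: free real vector space on ordered pairs of vertices. -/
abbrev C1 (V : Type*) := (V × V) →₀ ℝ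
/-- 2-chains: free real vector space on ordered triples of vertices. -/
abbrev C2 (V : Type*) := (V × V × V) →₀ ℝ
/-- 3-chains. -/
abbrev C3 (V : Type*) := (V × V × V × V) →₀ ℝ

/-- ℓ¹-norm of a finitely supported chain. -/
noncomputable def l1 {α : Type*} (c : α →₀ ℝ) : ℝ := c.support.sum fun t => |c t|

/-- Boundary map ∂ : C₂ → C₁, (x₀,x₁,x₂) ↦ (x₁,x₂) − (x₀,x₂) + (x₀,x₁). -/
noncomputable def bdry2 : C2 V →ₗ[ℝ] C1 V :=
  Finsupp.lsum ℝ fun t => LinearMap.toSpanSingleton ℝ (C1 V)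
    (single (t.2.1, t.2.2) 1 - single (t.1, t.2.2) 1 + single (t.1, t.2.1) 1)

/-- Boundary map ∂ : C₁ → C₀, (x₀,x₁) ↦ x₁ − x₀. -/
noncomputable def bdry1 : C1 V →ₗ[ℝ] C0 V :=
  Finsupp.lsum ℝ fun t => LinearMap.toSpanSingleton ℝ (C0 V)
    (single t.2 1 - single t.1 1)

/-- Boundary map ∂ : C₃ → C₂. -/
noncomputable def bdry3 : C3 V →ₗ[ℝ] C2 V :=
  Finsupp.lsum ℝ fun t => LinearMap.toSpanSingleton ℝ (C2 V)
    (single (t.2.1, t.2.2.1, t.2.2.2) 1 - single (t.1, t.2.2.1, t.2.2.2) 1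
      + single (t.1, t.2.1, t.2.2.2) 1 - single (t.1, t.2.1, t.2.2.1) 1)

/-- Two vertices are at (finite) distance at most R. -/
def pairOK (G : SimpleGraph V) (R : ℕ) (a b : V) : Prop :=
  G.Reachable a b ∧ G.dist a b ≤ R

/-- Membership in C₁^R : supported on pairs at distance ≤ R. -/
def memC1R (G : SimpleGraph V) (R : ℕ) (c : C1 V) : Prop :=
  ∀ t ∈ c.support, pairOK G R t.1 t.2

/-- Membership in C₂^R : supported on triples of diameter ≤ R. -/
def memC2R (G : SimpleGraph V) (R : ℕ) (c : C2 V) : Prop :=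
  ∀ t ∈ c.support, pairOK G R t.1 t.2.1 ∧ pairOK G R t.1 t.2.2 ∧ pairOK G R t.2.1 t.2.2

/-- Membership in B₁^R = ∂C₂^R. -/
def memB1R (G : SimpleGraph V) (R : ℕ) (b : C1 V) : Prop :=
  ∃ a : C2 V, memC2R G R a ∧ bdry2 a = b

/-- The filling norm ‖b‖_F^R = inf of ℓ¹-norms of fillings in C₂^R. -/
noncomputable def fillNorm (G : SimpleGraph V) (R : ℕ) (b : C1 V) : ℝ :=
  sInf {r | ∃ a : C2 V, memC2R G R a ∧ bdry2 a = b ∧ r = l1 a}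

/-- The 1-chain c(p) associated to a walk p. -/
noncomputable def walkChain (G : SimpleGraph V) {x y : V} (p : G.Walk x y) : C1 V :=
  (p.darts.map fun d => single d.toProd (1 : ℝ)).sum

/-- A walk is geodesic if its length realizes the distance of its endpoints. -/
def IsGeodesicWalk (G : SimpleGraph V) {x y : V} (p : G.Walk x y) : Prop :=
  p.length = G.dist x y

/-- Geodesic triangles of G are n-slim. -/
def SlimTriangles (G : SimpleGraph V) (n : ℕ) : Prop :=
  ∀ (x y z : V) (p : G.Walk x y) (q : G.Walk y z) (r : G.Walk x z),
    IsGeodesicWalk G p → IsGeodesicWalk G q → IsGeodesicWalk G r →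
    (∀ v ∈ p.support, ∃ w, (w ∈ q.support ∨ w ∈ r.support) ∧ G.dist v w ≤ n) ∧
    (∀ v ∈ q.support, ∃ w, (w ∈ p.support ∨ w ∈ r.support) ∧ G.dist v w ≤ n) ∧
    (∀ v ∈ r.support, ∃ w, (w ∈ p.support ∨ w ∈ q.support) ∧ G.dist v w ≤ n)

/-- A real chain has integer coefficients. -/
def IntCoeffs {α : Type*} (c : α →₀ ℝ) : Prop := ∀ t, ∃ n : ℤ, c t = n

/-- X has a finite homological isoperimetric function with parameters R₀, θ :
for every closed path p, c(p) ∈ B₁^{R₀} and ‖c(p)‖_F^{R₀} ≤ θ(length p). -/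
def FinHomIsop (G : SimpleGraph V) (R₀ : ℕ) (θ : ℕ → ℝ) : Prop :=
  ∀ (x : V) (p : G.Walk x x), memB1R G R₀ (walkChain G p) ∧
    fillNorm G R₀ (walkChain G p) ≤ θ p.length

/-- A 2-cochain is bounded on each C₂^R. -/
def Bdd2 {W : Type*} [NormedAddCommGroup W] [NormedSpace ℝ W]
    (G : SimpleGraph V) (f : C2 V →ₗ[ℝ] W) : Prop :=
  ∀ R : ℕ, ∃ M : ℝ, ∀ c : C2 V, memC2R G R c → ‖f c‖ ≤ M * l1 c

/-- A 1-cochain is bounded on each C₁^R. -/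
def Bdd1 {W : Type*} [NormedAddCommGroup W] [NormedSpace ℝ W]
    (G : SimpleGraph V) (f : C1 V →ₗ[ℝ] W) : Prop :=
  ∀ R : ℕ, ∃ M : ℝ, ∀ c : C1 V, memC1R G R c → ‖f c‖ ≤ M * l1 c

/-- A Banach space is 1-injective: bounded linear maps into it extend from
subspaces of normed spaces with the same norm. -/
def IsOneInjective (W : Type*) [NormedAddCommGroup W] [NormedSpace ℝ W] : Prop :=
  ∀ (E : Type) [NormedAddCommGroup E] [NormedSpace ℝ E],
    ∀ (p : Subspace ℝ E) (φ : p →L[ℝ] W),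
      ∃ ψ : E →L[ℝ] W, (∀ x : p, ψ x = φ x) ∧ ‖ψ‖ ≤ ‖φ‖

/-- The Cayley graph of a group with respect to a generating set. -/
def cayley {G : Type*} [Group G] (S : Set G) : SimpleGraph G where
  Adj a b := a ≠ b ∧ ∃ s ∈ S, b = a * s ∨ a = b * s
  symm := by
    constructor
    rintro a b ⟨hne, s, hs, h⟩
    exact ⟨hne.symm, s, hs, h.symm⟩
  loopless := ⟨fun a h => h.1 rfl⟩

/-- Boundary map for integral 1-chains. -/
noncomputable def bdryZ {G : Type*} : ((G × G) →₀ ℤ) →ₗ[ℤ] (G →₀ ℤ) :=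
  Finsupp.lsum ℤ fun t => LinearMap.toSpanSingleton ℤ (G →₀ ℤ)
    (single t.2 1 - single t.1 1)

/-- ℓ¹-norm of an integral chain. -/
def l1Z {α : Type*} (c : α →₀ ℤ) : ℕ := c.support.sum fun t => (c t).natAbs

/-- An integral cellular 1-cycle on the Cayley graph: supported on edges,
with vanishing boundary. -/
def IsCycleZ {G : Type*} [Group G] (S : Set G) (c : (G × G) →₀ ℤ) : Prop :=
  (∀ t ∈ c.support, (cayley S).Adj t.1 t.2) ∧ bdryZ c = 0

/-- A group is finitely presented. -/
def IsFinitelyPresented (G : Type*) [Group G] : Prop :=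
  ∃ (n : ℕ) (rels : Set (FreeGroup (Fin n))),
    rels.Finite ∧ Nonempty (PresentedGroup rels ≃* G)


open Pointwise

/- `G` acts on chains by `g • c = mapDomain (g • ·) c`; on `C1Z G` this is the translation
`mapDomain (fun t => (g * t.1, g * t.2))` of the statement. -/
attribute [local instance] Finsupp.comapSMul Finsupp.comapMulAction Finsupp.comapDistribMulAction

abbrev C1Z (G : Type*) := (G × G) →₀ ℤ

section L1Norm

variable {α : Type*}

theorem l1Z_eq_sum_of_support_subset (c : α →₀ ℤ) {s : Finset α} (h : c.support ⊆ s) :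
    l1Z c = ∑ t ∈ s, (c t).natAbs :=
  Finsupp.sum_of_support_subset c h _ fun _ _ => rfl

theorem l1Z_add_single_add_natAbs (c : α →₀ ℤ) (t : α) (k : ℤ) :
    l1Z (c + single t k) + (c t).natAbs = l1Z c + (c t + k).natAbs := by
  classical
  have hs : c.support ⊆ insert t c.support := Finset.subset_insert _ _
  have hs' : (c + single t k).support ⊆ insert t c.support := by
    rw [Finset.insert_eq, Finset.union_comm]
    exact Finsupp.support_add.trans (Finset.union_subset_union le_rfl Finsupp.support_single_subset)
  rw [l1Z_eq_sum_of_support_subset _ hs', l1Z_eq_sum_of_support_subset _ hs,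
    ← Finset.add_sum_erase _ _ (Finset.mem_insert_self t _),
    ← Finset.add_sum_erase _ _ (Finset.mem_insert_self t _),
    Finset.sum_congr rfl fun u hu => by
      rw [Finsupp.add_apply, Finsupp.single_eq_of_ne (Finset.ne_of_mem_erase hu), add_zero]]
  simp only [Finsupp.add_apply, Finsupp.single_eq_same]
  ring

end L1Norm

section Area

variable (G : Type*) {M : Type*} [Monoid G] [AddCommMonoid M] [DistribMulAction G M]

/-- The `𝒞`-area of `c`, the least number of translates of elements of `𝒞` summing to `c`,
is at most `k`. -/
def AreaLE (𝒞 : Set M) (c : M) (k : ℕ) : Prop :=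
  ∃ L : List (G × M), L.length ≤ k ∧ (∀ p ∈ L, p.2 ∈ 𝒞) ∧
    (L.map fun p => p.1 • p.2).sum = c

variable {G} {𝒞 𝒟 : Set M} {a b c : M} {k l : ℕ}

theorem AreaLE.zero : AreaLE G 𝒞 0 0 := ⟨[], le_rfl, by simp, rfl⟩

theorem AreaLE.smul_mem (g : G) (hc : c ∈ 𝒞) : AreaLE G 𝒞 (g • c) 1 :=
  ⟨[(g, c)], le_rfl, by simpa using hc, by simp⟩

theorem AreaLE.mono (h : AreaLE G 𝒞 c k) (h𝒞 : 𝒞 ⊆ 𝒟) (hk : k ≤ l) :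
    AreaLE G 𝒟 c l :=
  let ⟨L, hL, hmem, hsum⟩ := h
  ⟨L, hL.trans hk, fun p hp => h𝒞 (hmem p hp), hsum⟩

theorem AreaLE.add (ha : AreaLE G 𝒞 a k) (hb : AreaLE G 𝒞 b l) :
    AreaLE G 𝒞 (a + b) (k + l) := by
  obtain ⟨L, hL, hLmem, rfl⟩ := ha
  obtain ⟨L', hL', hL'mem, rfl⟩ := hb
  refine ⟨L ++ L', by simp only [List.length_append]; omega, ?_, by simp⟩
  simp only [List.mem_append]
  rintro p (hp | hp)
  exacts [hLmem p hp, hL'mem p hp]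

theorem AreaLE.smul (g : G) (h : AreaLE G 𝒞 c k) : AreaLE G 𝒞 (g • c) k := by
  obtain ⟨L, hL, hmem, rfl⟩ := h
  refine ⟨L.map fun p => (g * p.1, p.2), by simpa using hL, List.forall_mem_map.mpr hmem, ?_⟩
  simp [List.smul_sum, Function.comp_def, mul_smul]

theorem AreaLE.trans {D : ℕ} (h : AreaLE G 𝒞 c k) (h𝒞 : ∀ x ∈ 𝒞, AreaLE G 𝒟 x D) :
    AreaLE G 𝒟 c (k * D) := by
  obtain ⟨L, hL, hmem, rfl⟩ := h
  induction L generalizing k with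
  | nil => exact AreaLE.zero.mono le_rfl (Nat.zero_le _)
  | cons p L ih =>
    simp only [List.forall_mem_cons, List.length_cons] at hmem hL
    have := ((h𝒞 p.2 hmem.1).smul p.1).add (ih le_rfl hmem.2)
    simp only [List.map_cons, List.sum_cons]
    exact this.mono le_rfl (by nlinarith)

theorem AreaLE.neg {M : Type*} [AddCommGroup M] [DistribMulAction G M] {𝒞 : Set M} {c : M}
    (h𝒞 : ∀ x ∈ 𝒞, -x ∈ 𝒞) (h : AreaLE G 𝒞 c k) : AreaLE G 𝒞 (-c) k := by
  obtain ⟨L, hL, hmem, rfl⟩ := h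
  refine ⟨L.map fun p => (p.1, -p.2), by simpa using hL,
    List.forall_mem_map.mpr fun p hp => h𝒞 _ (hmem p hp), ?_⟩
  rw [List.sum_neg, List.map_map, List.map_map]
  simp [Function.comp_def]

theorem AreaLE.exists_fin (h : AreaLE G 𝒞 c k) :
    ∃ m ≤ k, ∃ (g : Fin m → G) (x : Fin m → M),
      (∀ i, x i ∈ 𝒞) ∧ c = ∑ i, g i • x i := by
  obtain ⟨L, hL, hmem, rfl⟩ := h
  exact ⟨L.length, hL, fun i => L[i].1, fun i => L[i].2, fun i => hmem _ (List.getElem_mem _),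
    (Fin.sum_univ_fun_getElem L fun p => p.1 • p.2).symm⟩

end Area

noncomputable section PathChain

variable {G : Type*} [Group G]

/-- The semidirect product `ℤ[G × G] ⋊ G`. An element records a path starting at `1` by its
1-chain and its endpoint; the product concatenates the second path, translated to start at
the endpoint of the first. -/
@[ext]
structure RootedPath (G : Type*) [Group G] where
  chain : C1Z G
  endpoint : G

namespace RootedPath

instance : Mul (RootedPath G) :=
  ⟨fun p q => ⟨p.chain + p.endpoint • q.chain, p.endpoint * q.endpoint⟩⟩

instance : One (RootedPath G) := ⟨⟨0, 1⟩⟩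

instance : Inv (RootedPath G) :=
  ⟨fun p => ⟨-(p.endpoint⁻¹ • p.chain), p.endpoint⁻¹⟩⟩

instance : Group (RootedPath G) where
  mul_assoc p q r := by
    ext1
    · change p.chain + p.endpoint • q.chain + (p.endpoint * q.endpoint) • r.chain
        = p.chain + p.endpoint • (q.chain + q.endpoint • r.chain)
      rw [smul_add, mul_smul, add_assoc]
    · exact mul_assoc _ _ _
  one_mul p := by
    ext1
    · exact (zero_add _).trans (one_smul _ _)
    · exact one_mul _
  mul_one p := by
    ext1
    · exact (congrArg _ (smul_zero _)).trans (add_zero _)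
    · exact mul_one _
  inv_mul_cancel p := by
    ext1
    · change -_ + _ = (0 : C1Z G)
      exact neg_add_cancel _
    · exact inv_mul_cancel _

def endpointHom : RootedPath G →* G where
  toFun := endpoint
  map_one' := rfl
  map_mul' _ _ := rfl

end RootedPath

variable {ι : Type*} (ν : ι → G)

def pathHom : FreeGroup ι →* RootedPath G :=
  FreeGroup.lift fun i => ⟨single (1, ν i) 1, ν i⟩

/-- The 1-chain of the path from `1` in the Cayley graph of `ν` spelled by a word. -/
def pathChain (w : FreeGroup ι) : C1Z G := (pathHom ν w).chain

theorem endpoint_pathHom (w : FreeGroup ι) : (pathHom ν w).endpoint = FreeGroup.lift ν w := by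
  have : RootedPath.endpointHom.comp (pathHom ν) = FreeGroup.lift ν :=
    FreeGroup.ext_hom _ _ fun i => by simp [pathHom, RootedPath.endpointHom]
  exact DFunLike.congr_fun this w

theorem pathChain_one : pathChain ν 1 = 0 := rfl

theorem pathChain_of (i : ι) : pathChain ν (FreeGroup.of i) = single (1, ν i) 1 := by
  simp [pathChain, pathHom]

theorem pathChain_mul (u v : FreeGroup ι) :
    pathChain ν (u * v) = pathChain ν u + FreeGroup.lift ν u • pathChain ν v := by
  simp only [pathChain, map_mul, ← endpoint_pathHom]
  rfl

theorem pathChain_inv (w : FreeGroup ι) :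
    pathChain ν w⁻¹ = -((FreeGroup.lift ν w)⁻¹ • pathChain ν w) := by
  simp only [pathChain, map_inv, ← endpoint_pathHom]
  rfl

theorem pathChain_inv_of (i : ι) :
    pathChain ν (FreeGroup.of i)⁻¹ = -single ((ν i)⁻¹, 1) 1 := by
  simp [pathChain_inv, pathChain_of, Finsupp.comapSMul_single]

end PathChain

section Boundary

theorem bdryZ_single {α : Type*} (t : α × α) (k : ℤ) :
    bdryZ (single t k) = k • (single t.2 1 - single t.1 1) := by
  rw [bdryZ, Finsupp.lsum_single]
  rfl

theorem exists_leaving_of_bdryZ_neg {α : Type*} (c : (α × α) →₀ ℤ) {a : α}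
    (h : bdryZ c a < 0) :
    ∃ t ∈ c.support, (t.1 = a ∧ 0 < c t) ∨ (t.2 = a ∧ c t < 0) := by
  classical
  by_contra! hcon
  refine h.not_ge ?_
  rw [bdryZ, Finsupp.lsum_apply, Finsupp.sum, Finsupp.finsetSum_apply]
  refine Finset.sum_nonneg fun t ht => ?_
  simp only [LinearMap.toSpanSingleton_apply, Finsupp.smul_apply, Finsupp.sub_apply,
    Finsupp.single_apply, smul_eq_mul]
  have := hcon t ht
  split_ifs <;> grind

variable {G : Type*} [Group G]

theorem bdryZ_smul (g : G) (c : C1Z G) : bdryZ (g • c) = g • bdryZ c := by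
  induction c using Finsupp.induction_linear with
  | zero => simp
  | add a b ha hb => rw [smul_add, map_add, map_add, ha, hb, smul_add]
  | single t k =>
    simp only [Finsupp.comapSMul_single, bdryZ_single, smul_comm g k, smul_sub]
    rfl

variable {ι : Type*} (ν : ι → G)

theorem bdryZ_pathChain (w : FreeGroup ι) :
    bdryZ (pathChain ν w) = single (FreeGroup.lift ν w) 1 - single 1 1 := by
  induction w using FreeGroup.induction_on with
  | C1 => simp [pathChain_one]
  | of i => simp [pathChain_of, bdryZ_single]
  | inv_of i ih =>
    rw [pathChain_inv, map_neg, bdryZ_smul, ih]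
    simp only [smul_sub, Finsupp.comapSMul_single, smul_eq_mul, FreeGroup.lift_apply_of,
      inv_mul_cancel, mul_one, neg_sub, map_inv]
  | mul u v hu hv =>
    rw [pathChain_mul, map_add, bdryZ_smul, hu, hv]
    simp only [smul_sub, Finsupp.comapSMul_single, smul_eq_mul, mul_one, map_mul]
    abel

theorem bdryZ_smul_pathChain (a : G) (w : FreeGroup ι) :
    bdryZ (a • pathChain ν w) = single (a * FreeGroup.lift ν w) 1 - single a 1 := by
  simp [bdryZ_smul, bdryZ_pathChain, smul_sub, Finsupp.comapSMul_single]

def edgeSet : Set (G × G) := {t | ∃ i, t.2 = t.1 * ν i}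

theorem smul_mem_supported_edgeSet (g : G) {c : C1Z G}
    (hc : c ∈ Finsupp.supported ℤ ℤ (edgeSet ν)) :
    g • c ∈ Finsupp.supported ℤ ℤ (edgeSet ν) := by
  classical
  rw [Finsupp.mem_supported] at hc ⊢
  intro t ht
  obtain ⟨u, hu, rfl⟩ := Finset.mem_image.mp (Finsupp.mapDomain_support ht)
  obtain ⟨i, hi⟩ := hc hu
  exact ⟨i, by simp [Prod.smul_snd, Prod.smul_fst, hi, mul_assoc]⟩

theorem pathChain_mem_supported (w : FreeGroup ι) :
    pathChain ν w ∈ Finsupp.supported ℤ ℤ (edgeSet ν) := by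
  induction w using FreeGroup.induction_on with
  | C1 => exact zero_mem _
  | of i => exact pathChain_of ν i ▸ Finsupp.single_mem_supported ℤ _ ⟨i, (one_mul _).symm⟩
  | inv_of i ih => exact pathChain_inv ν _ ▸ neg_mem (smul_mem_supported_edgeSet ν _ ih)
  | mul u v hu hv => exact pathChain_mul ν u v ▸ add_mem hu (smul_mem_supported_edgeSet ν _ hv)

end Boundary

section Decomposition

variable {G : Type*} [Group G] {ι : Type*} (ν : ι → G)

local notation "E" => Finsupp.supported ℤ ℤ (edgeSet ν)

theorem sub_smul_pathChain_mem {c : C1Z G} (hc : c ∈ E) (a : G) (w : FreeGroup ι) :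
    c - a • pathChain ν w ∈ E :=
  sub_mem hc (smul_mem_supported_edgeSet ν a (pathChain_mem_supported ν w))

theorem smul_pathChain_mk_cons (a : G) (e : ι × Bool) (l : List (ι × Bool)) :
    a • pathChain ν (FreeGroup.mk (e :: l)) = a • pathChain ν (FreeGroup.mk [e])
      + (a * FreeGroup.lift ν (FreeGroup.mk [e])) • pathChain ν (FreeGroup.mk l) := by
  rw [← List.singleton_append, ← FreeGroup.mul_mk, pathChain_mul, smul_add, mul_smul]

/-- The letter `e` walks along `t`, backwards when `c t < 0`. -/
theorem exists_step {c : C1Z G} (hc : c ∈ E) {a : G} {t : G × G} (ht : t ∈ c.support)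
    (hdir : (t.1 = a ∧ 0 < c t) ∨ (t.2 = a ∧ c t < 0)) :
    ∃ e : ι × Bool, l1Z (c - a • pathChain ν (FreeGroup.mk [e])) + 1 = l1Z c := by
  obtain ⟨i, hi⟩ := (Finsupp.mem_supported ℤ c).mp hc ht
  rcases hdir with ⟨rfl, hpos⟩ | ⟨rfl, hneg⟩
  · refine ⟨(i, true), ?_⟩
    have key := l1Z_add_single_add_natAbs c t (-1)
    have hstep : t.1 • pathChain ν (FreeGroup.mk [(i, true)]) = single t 1 := by
      rw [← FreeGroup.of.eq_def, pathChain_of, Finsupp.comapSMul_single]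
      congr 1
      ext <;> simp [hi]
    rw [hstep, sub_eq_add_neg, ← Finsupp.single_neg]
    omega
  · refine ⟨(i, false), ?_⟩
    have key := l1Z_add_single_add_natAbs c t 1
    have hstep : t.2 • pathChain ν (FreeGroup.mk [(i, false)]) = -single t 1 := by
      rw [show FreeGroup.mk [(i, false)] = (FreeGroup.of i)⁻¹ from rfl, pathChain_inv_of,
        smul_neg, Finsupp.comapSMul_single]
      congr 2
      ext <;> simp [hi]
    rw [hstep, sub_neg_eq_add]
    omega

theorem pathChain_cons_of_step {c : C1Z G} {a b : G} {e : ι × Bool} {l : List (ι × Bool)}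
    (he : l1Z (c - a • pathChain ν (FreeGroup.mk [e])) + 1 = l1Z c)
    (hl : a * FreeGroup.lift ν (FreeGroup.mk [e]) * FreeGroup.lift ν (FreeGroup.mk l) = b)
    (hlen : l1Z (c - a • pathChain ν (FreeGroup.mk [e])
        - (a * FreeGroup.lift ν (FreeGroup.mk [e])) • pathChain ν (FreeGroup.mk l)) + l.length
      ≤ l1Z (c - a • pathChain ν (FreeGroup.mk [e]))) :
    a * FreeGroup.lift ν (FreeGroup.mk (e :: l)) = b ∧
      l1Z (c - a • pathChain ν (FreeGroup.mk (e :: l))) + (e :: l).length ≤ l1Z c := by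
  refine ⟨?_, ?_⟩
  · rw [← List.singleton_append, ← FreeGroup.mul_mk, map_mul, ← mul_assoc, hl]
  · rw [smul_pathChain_mk_cons, ← sub_sub, List.length_cons]
    omega

theorem exists_path {c : C1Z G} (hc : c ∈ E) {a b : G}
    (hb : bdryZ c = single b 1 - single a 1) :
    ∃ l : List (ι × Bool), a * FreeGroup.lift ν (FreeGroup.mk l) = b ∧
      l1Z (c - a • pathChain ν (FreeGroup.mk l)) + l.length ≤ l1Z c := by
  induction hn : l1Z c using Nat.strong_induction_on generalizing c a with
  | _ n ih =>
  by_cases hab : a = b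
  · refine ⟨[], ?_, ?_⟩ <;> simp [← FreeGroup.one_eq_mk, pathChain_one, hab, hn]
  have hneg : bdryZ c a < 0 := by
    simp [hb, Ne.symm hab]
  obtain ⟨t, ht, hdir⟩ := exists_leaving_of_bdryZ_neg c hneg
  obtain ⟨e, he⟩ := exists_step ν hc ht hdir
  have hb' : bdryZ (c - a • pathChain ν (FreeGroup.mk [e]))
      = single b 1 - single (a * FreeGroup.lift ν (FreeGroup.mk [e])) 1 := by
    rw [map_sub, hb, bdryZ_smul_pathChain]
    abel
  obtain ⟨l, hl, hlen⟩ := ih _ (by omega) (sub_smul_pathChain_mem ν hc a _) hb' rfl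
  exact ⟨e :: l, pathChain_cons_of_step ν he hl hlen |>.imp_right (·.trans hn.le)⟩

theorem exists_loop {c : C1Z G} (hc : c ∈ E) (hb : bdryZ c = 0) (h0 : c ≠ 0) :
    ∃ (a : G) (l : List (ι × Bool)), l ≠ [] ∧ FreeGroup.lift ν (FreeGroup.mk l) = 1 ∧
      l1Z (c - a • pathChain ν (FreeGroup.mk l)) + l.length ≤ l1Z c := by
  obtain ⟨t, ht⟩ := Finsupp.support_nonempty_iff.mpr h0
  obtain ⟨a, hdir⟩ : ∃ a, (t.1 = a ∧ 0 < c t) ∨ (t.2 = a ∧ c t < 0) := by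
    rcases (Finsupp.mem_support_iff.mp ht).lt_or_gt with h | h
    exacts [⟨t.2, Or.inr ⟨rfl, h⟩⟩, ⟨t.1, Or.inl ⟨rfl, h⟩⟩]
  obtain ⟨e, he⟩ := exists_step ν hc ht hdir
  have hb' : bdryZ (c - a • pathChain ν (FreeGroup.mk [e]))
      = single a 1 - single (a * FreeGroup.lift ν (FreeGroup.mk [e])) 1 := by
    rw [map_sub, hb, bdryZ_smul_pathChain]
    abel
  obtain ⟨l, hl, hlen⟩ := exists_path ν (sub_smul_pathChain_mem ν hc a _) hb'
  obtain ⟨hloop, hlen'⟩ := pathChain_cons_of_step ν he hl hlen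
  exact ⟨a, e :: l, List.cons_ne_nil _ _, mul_eq_left.mp hloop, hlen'⟩

def loopChains (n : ℕ) : Set (C1Z G) :=
  {x | ∃ l : List (ι × Bool), l.length ≤ n ∧ FreeGroup.lift ν (FreeGroup.mk l) = 1 ∧
    pathChain ν (FreeGroup.mk l) = x}

theorem loopChains_mono {m n : ℕ} (h : m ≤ n) : loopChains ν m ⊆ loopChains ν n :=
  fun _ ⟨l, hl, hloop, hx⟩ => ⟨l, hl.trans h, hloop, hx⟩

theorem areaLE_loopChains {c : C1Z G} (hc : c ∈ E) (hb : bdryZ c = 0) :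
    AreaLE G (loopChains ν (l1Z c)) c (l1Z c) := by
  induction hn : l1Z c using Nat.strong_induction_on generalizing c with
  | _ n ih =>
  by_cases h0 : c = 0
  · exact h0 ▸ AreaLE.zero.mono (Set.Subset.refl _) (Nat.zero_le _)
  obtain ⟨a, l, hl, hloop, hlen⟩ := exists_loop ν hc hb h0
  have hl1 : 1 ≤ l.length := List.length_pos_iff.mpr hl
  have hb' : bdryZ (c - a • pathChain ν (FreeGroup.mk l)) = 0 := by
    rw [map_sub, hb, bdryZ_smul_pathChain, hloop, mul_one, sub_self, sub_self]
  have hrest := ih _ (by omega) (sub_smul_pathChain_mem ν hc a _) hb' rfl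
  have hloopArea : AreaLE G (loopChains ν n) (a • pathChain ν (FreeGroup.mk l)) 1 :=
    AreaLE.smul_mem a ⟨l, by omega, hloop, rfl⟩
  have := (hrest.mono (loopChains_mono ν (by omega)) le_rfl).add hloopArea
  rw [sub_add_cancel] at this
  exact this.mono (Set.Subset.refl _) (by omega)

end Decomposition

section Relators

variable {G : Type*} [Group G] {ι : Type*} (ν : ι → G)

theorem pathChain_mul_of_lift_eq_one {u : FreeGroup ι} (hu : FreeGroup.lift ν u = 1)
    (v : FreeGroup ι) : pathChain ν (u * v) = pathChain ν u + pathChain ν v := by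
  rw [pathChain_mul, hu, one_smul]

theorem pathChain_inv_of_lift_eq_one {u : FreeGroup ι} (hu : FreeGroup.lift ν u = 1) :
    pathChain ν u⁻¹ = -pathChain ν u := by
  rw [pathChain_inv, hu, inv_one, one_smul]

theorem pathChain_conj {r : FreeGroup ι} (hr : FreeGroup.lift ν r = 1) (u : FreeGroup ι) :
    pathChain ν (u * r * u⁻¹) = FreeGroup.lift ν u • pathChain ν r := by
  rw [pathChain_mul, pathChain_mul, pathChain_inv, map_mul, hr, mul_one, smul_neg, smul_smul,
    mul_inv_cancel, one_smul]
  abel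

/-- The negatives are there because only translates with coefficient `+1` may be summed. -/
def relatorChains (R : Set (FreeGroup ι)) : Set (C1Z G) :=
  pathChain ν '' R ∪ -(pathChain ν '' R)

variable {R : Set (FreeGroup ι)}

theorem neg_mem_relatorChains {x : C1Z G} (hx : x ∈ relatorChains ν R) :
    -x ∈ relatorChains ν R := by
  rcases hx with hx | hx
  · exact Or.inr (by rwa [Set.mem_neg, neg_neg])
  · exact Or.inl hx

theorem mem_supported_and_bdryZ_eq_zero_of_mem_relatorChains (hR : R ⊆ (FreeGroup.lift ν).ker)
    {x : C1Z G} (hx : x ∈ relatorChains ν R) :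
    x ∈ Finsupp.supported ℤ ℤ (edgeSet ν) ∧ bdryZ x = 0 := by
  wlog hpos : x ∈ pathChain ν '' R generalizing x
  · have := this (neg_mem_relatorChains ν hx) (hx.resolve_left hpos)
    rwa [neg_mem_iff, map_neg, neg_eq_zero] at this
  obtain ⟨r, hr, rfl⟩ := hpos
  refine ⟨pathChain_mem_supported ν r, ?_⟩
  rw [bdryZ_pathChain, MonoidHom.mem_ker.mp (hR hr), sub_self]

theorem exists_areaLE_pathChain (hR : R ⊆ (FreeGroup.lift ν).ker) {w : FreeGroup ι}
    (hw : w ∈ Subgroup.normalClosure R) :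
    ∃ k, AreaLE G (relatorChains ν R) (pathChain ν w) k := by
  have hker : Subgroup.normalClosure R ≤ (FreeGroup.lift ν).ker :=
    Subgroup.normalClosure_le_normal hR
  induction hw using Subgroup.closure_induction with
  | mem x hx =>
    obtain ⟨r, hr, hconj⟩ := Group.mem_conjugatesOfSet_iff.mp hx
    obtain ⟨u, rfl⟩ := isConj_iff.mp hconj
    rw [pathChain_conj ν (hR hr)]
    exact ⟨1, AreaLE.smul_mem _ (Or.inl ⟨r, hr, rfl⟩)⟩
  | one => exact ⟨0, AreaLE.zero⟩
  | mul x y hx _ hxA hyA =>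
    obtain ⟨k, hk⟩ := hxA
    obtain ⟨l, hl⟩ := hyA
    rw [pathChain_mul_of_lift_eq_one ν (hker hx)]
    exact ⟨k + l, hk.add hl⟩
  | inv x hx hxA =>
    obtain ⟨k, hk⟩ := hxA
    rw [pathChain_inv_of_lift_eq_one ν (hker hx)]
    exact ⟨k, hk.neg fun _ => neg_mem_relatorChains ν⟩

/-- There are only finitely many words of length at most `n`. -/
theorem exists_areaLE_loopChains [Finite ι]
    (hR : Subgroup.normalClosure R = (FreeGroup.lift ν).ker) (n : ℕ) :
    ∃ D, ∀ x ∈ loopChains ν n, AreaLE G (relatorChains ν R) x D := by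
  have hR' : R ⊆ (FreeGroup.lift ν).ker := hR ▸ Subgroup.subset_normalClosure
  have harea (l : List (ι × Bool)) : ∃ k, FreeGroup.lift ν (FreeGroup.mk l) = 1 →
      AreaLE G (relatorChains ν R) (pathChain ν (FreeGroup.mk l)) k := by
    by_cases hl : FreeGroup.lift ν (FreeGroup.mk l) = 1
    · obtain ⟨k, hk⟩ := exists_areaLE_pathChain ν hR' (hR ▸ MonoidHom.mem_ker.mpr hl)
      exact ⟨k, fun _ => hk⟩
    · exact ⟨0, fun h => absurd h hl⟩
  choose K hK using harea
  obtain ⟨D, hD⟩ := ((List.finite_length_le (ι × Bool) n).image K).bddAbove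
  exact ⟨D, fun _ ⟨l, hl, hloop, hx⟩ =>
    hx ▸ (hK l hloop).mono (Set.Subset.refl _) (hD ⟨l, hl, rfl⟩)⟩

theorem exists_areaLE_of_bdryZ_eq_zero [Finite ι]
    (hR : Subgroup.normalClosure R = (FreeGroup.lift ν).ker) (n : ℕ) :
    ∃ D, ∀ c ∈ Finsupp.supported ℤ ℤ (edgeSet ν), bdryZ c = 0 → l1Z c ≤ n →
      AreaLE G (relatorChains ν R) c (n * D) := by
  obtain ⟨D, hD⟩ := exists_areaLE_loopChains ν hR n
  exact ⟨D, fun c hc hb hn =>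
    ((areaLE_loopChains ν hc hb).mono (loopChains_mono ν hn) hn).trans hD⟩

end Relators

section Presentation

theorem IsFinitelyPresented.group {G : Type*} [Group G] (h : IsFinitelyPresented G) :
    Group.IsFinitelyPresented G := by
  obtain ⟨n, rels, hrels, ⟨e⟩⟩ := h
  have := hrels.to_subtype
  exact Group.IsFinitelyPresented.equiv e

/-- Tietze: the relators are the old ones rewritten in the new generators, plus one relation
per new generator expressing it through the old ones. -/
theorem Group.IsFinitelyPresented.ker_isFinitelyNormallyGenerated {G : Type*} [Group G]
    [hG : Group.IsFinitelyPresented G] {ι : Type*} [Finite ι] {π : FreeGroup ι →* G}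
    (hπ : Function.Surjective π) : π.ker.IsFinitelyNormallyGenerated := by
  obtain ⟨n, φ, hφ, rels, hrels, hker⟩ := hG
  let α : FreeGroup (Fin n) →* FreeGroup ι :=
    FreeGroup.lift fun k => Function.surjInv hπ (φ (FreeGroup.of k))
  let β : FreeGroup ι →* FreeGroup (Fin n) :=
    FreeGroup.lift fun i => Function.surjInv hφ (π (FreeGroup.of i))
  have hα : π.comp α = φ :=
    FreeGroup.ext_hom _ _ fun k => by simp [α, Function.surjInv_eq hπ]
  have hβ : φ.comp β = π :=
    FreeGroup.ext_hom _ _ fun i => by simp [β, Function.surjInv_eq hφ]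
  let T := α '' rels ∪ Set.range fun i => FreeGroup.of i / α (β (FreeGroup.of i))
  refine ⟨T, (hrels.image α).union (Set.finite_range _), le_antisymm ?_ ?_⟩
  · refine Subgroup.normalClosure_le_normal ?_
    rintro _ (⟨r, hr, rfl⟩ | ⟨i, rfl⟩)
    · rw [SetLike.mem_coe, MonoidHom.mem_ker, ← MonoidHom.comp_apply, hα, ← MonoidHom.mem_ker,
        ← hker]
      exact Subgroup.subset_normalClosure hr
    · rw [SetLike.mem_coe, MonoidHom.mem_ker, map_div, ← MonoidHom.comp_apply π α, hα,
        ← MonoidHom.comp_apply, hβ, div_self']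
  · set N := Subgroup.normalClosure T
    let q := QuotientGroup.mk' N
    have hq : q.comp (α.comp β) = q := FreeGroup.ext_hom _ _ fun i => by
      have : FreeGroup.of i / α (β (FreeGroup.of i)) ∈ N :=
        Subgroup.subset_normalClosure (Or.inr ⟨i, rfl⟩)
      simpa [q, eq_comm, QuotientGroup.eq_iff_div_mem] using this
    have hrels : Subgroup.normalClosure rels ≤ N.comap α :=
      Subgroup.normalClosure_le_normal fun r hr =>
        show α r ∈ N from Subgroup.subset_normalClosure (Or.inl ⟨r, hr, rfl⟩)
    intro w hw
    have hβw : β w ∈ φ.ker := by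
      rw [MonoidHom.mem_ker, ← MonoidHom.comp_apply, hβ]
      exact hw
    have hαβw : q (α (β w)) = 1 := (QuotientGroup.eq_one_iff _).mpr (hrels (hker ▸ hβw))
    rw [← QuotientGroup.eq_one_iff]
    exact (DFunLike.congr_fun hq w).symm.trans hαβw

end Presentation

section Cayley

variable {G : Type*} [Group G] (S : Set G)

theorem cayley_adj_mul_left (g a b : G) :
    (cayley S).Adj (g * a) (g * b) ↔ (cayley S).Adj a b := by
  simp [cayley, mul_assoc]

theorem edgeSet_neighbors :
    edgeSet (Subtype.val : {x | (cayley S).Adj 1 x} → G) = {t | (cayley S).Adj t.1 t.2} := by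
  ext ⟨a, b⟩
  change (∃ x : {x | (cayley S).Adj 1 x}, b = a * x) ↔ (cayley S).Adj a b
  constructor
  · rintro ⟨⟨x, hx⟩, rfl⟩
    simpa using (cayley_adj_mul_left S a 1 x).mpr hx
  · intro h
    exact ⟨⟨a⁻¹ * b, by simpa using (cayley_adj_mul_left S a⁻¹ a b).mpr h⟩, by group⟩

theorem finite_neighbors (hS : S.Finite) : {x | (cayley S).Adj 1 x}.Finite := by
  refine (hS.union hS.inv).subset ?_
  rintro x ⟨-, s, hs, h | h⟩
  · exact Or.inl (by rwa [h, one_mul])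
  · exact Or.inr (by rwa [Set.mem_inv, eq_inv_of_mul_eq_one_left h.symm, inv_inv])

theorem closure_neighbors (hS : Subgroup.closure S = ⊤) :
    Subgroup.closure {x | (cayley S).Adj 1 x} = ⊤ := by
  rw [eq_top_iff, ← hS, ← Subgroup.closure_sdiff_one]
  exact Subgroup.closure_mono fun s ⟨hs, hs1⟩ =>
    ⟨Ne.symm hs1, s, hs, Or.inl (one_mul s).symm⟩

end Cayley

/-- a finitely presented group has S-bounded H² for every finite
generating set S: the ℤG-module of integral 1-cycles on Cay(G,S) is generated
by a collection 𝒞 of cycles of uniformly bounded ℓ¹-norm, with the number of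
translates needed controlled by a function Δ of the ℓ¹-norm. -/
theorem finitely_presented_S_bounded_H2 (G : Type) [Group G]
    (hfp : IsFinitelyPresented G) (S : Finset G)
    (hgen : Subgroup.closure (S : Set G) = ⊤) :
    ∃ (𝒞 : Set ((G × G) →₀ ℤ)) (N : ℕ) (Δ : ℕ → ℕ),
      (∀ c ∈ 𝒞, IsCycleZ (S : Set G) c ∧ l1Z c ≤ N) ∧
      (∀ c : (G × G) →₀ ℤ, IsCycleZ (S : Set G) c → ∀ n : ℕ, l1Z c ≤ n →
        ∃ k : ℕ, k ≤ Δ n ∧ ∃ (g : Fin k → G) (cc : Fin k → ((G × G) →₀ ℤ)),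
          (∀ i, cc i ∈ 𝒞) ∧
          c = ∑ i, Finsupp.mapDomain
                (fun t => (g i * t.1, g i * t.2)) (cc i)) := by
  have := hfp.group
  let ν : {x | (cayley (S : Set G)).Adj 1 x} → G := Subtype.val
  have := (finite_neighbors _ S.finite_toSet).to_subtype
  have hν : Function.Surjective (FreeGroup.lift ν) := by
    rw [← MonoidHom.range_eq_top, FreeGroup.range_lift_eq_closure,
      show Set.range ν = _ from Subtype.range_coe, closure_neighbors _ hgen]
  obtain ⟨R, hRfin, hR⟩ := Group.IsFinitelyPresented.ker_isFinitelyNormallyGenerated hν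
  have hedges := congrArg (Finsupp.supported ℤ ℤ) (edgeSet_neighbors (S : Set G))
  choose D hD using exists_areaLE_of_bdryZ_eq_zero ν hR
  have h𝒞 : (relatorChains ν R).Finite := (hRfin.image _).union (hRfin.image _).neg
  obtain ⟨N, hN⟩ := (h𝒞.image l1Z).bddAbove
  refine ⟨relatorChains ν R, N, fun n => n * D n, fun c hc => ⟨?_, hN ⟨c, hc, rfl⟩⟩,
    fun c hc n hn => ?_⟩
  · obtain ⟨hsupp, hb⟩ :=
      mem_supported_and_bdryZ_eq_zero_of_mem_relatorChains ν
        (hR ▸ Subgroup.subset_normalClosure) hc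
    rw [hedges, Finsupp.mem_supported] at hsupp
    exact ⟨fun t ht => hsupp ht, hb⟩
  · have hsupp : c ∈ Finsupp.supported ℤ ℤ (edgeSet ν) := by
      rw [hedges, Finsupp.mem_supported]
      exact hc.1
    exact (hD n c hsupp hc.2 hn).exists_fin
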